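/- Let (a_0, …, a_{f−1}) be a tame signature for a prime p and integer f ≥ 1, and let J ⊆ ℤ/fℤ with δ(J) ⊄ J. Then the set μ(J) = {[i_1], …, [i_r]} produced by the construction is independent of the choice of the initial element [i_1] ∈ δ(J) ∖ J. -/

import Mathlib

open scoped Classical

/-- `a : ℤ → ℕ` represents a tame signature `(a_0, …, a_{f−1}) ∈ {1,…,p}^f` (not all
entries equal to `p`), with the indices extended to all of `ℤ` by `f`-periodicity. -/
def IsTameSignature (p f : ℕ) (a : ℤ → ℕ) : Prop :=
  0 < f ∧ (∀ j : ℤ, a (j + f) = a j) ∧ (∀ j : ℤ, 1 ≤ a j ∧ a j ≤ p) ∧ ∃ j : ℤ, a j ≠ p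

/-- `([i], [i+t])` with `1 ≤ t ≤ f−1` is a dependent pair if `a_{i+1} = p`,
`a_{i+t+1} ≠ p`, and for some `s ∈ {1,…,t}` one has
`a_{i+2} = ⋯ = a_{i+s} = p−1` and `a_{i+s+1} = ⋯ = a_{i+t} = p`. -/
def IsDependentPair (p f : ℕ) (a : ℤ → ℕ) (x y : ZMod f) : Prop :=
  ∃ i t : ℤ, 1 ≤ t ∧ t ≤ (f : ℤ) - 1 ∧ x = (i : ZMod f) ∧ y = ((i + t : ℤ) : ZMod f) ∧
    a (i + 1) = p ∧ a (i + t + 1) ≠ p ∧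
    ∃ s : ℤ, 1 ≤ s ∧ s ≤ t ∧
      (∀ m : ℤ, i + 2 ≤ m → m ≤ i + s → a m = p - 1) ∧
      (∀ m : ℤ, i + s + 1 ≤ m → m ≤ i + t → a m = p)

/-- A subset `J ⊆ ℤ/fℤ` is admissible if for every dependent pair `([j],[i])` with
`[i] ∈ J` one also has `[j] ∈ J`. -/
def SigAdmissible (p f : ℕ) (a : ℤ → ℕ) (J : Set (ZMod f)) : Prop :=
  ∀ x y : ZMod f, IsDependentPair p f a x y → y ∈ J → x ∈ J

/-- The shifting function `δ : ℤ → ℤ`: `δ(j) = j` unless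
`(a_{i+1}, a_{i+2}, …, a_j) = (p, p−1, …, p−1)` for some (necessarily unique) `i < j`,
in which case `δ(j) = i`. -/
noncomputable def sigDelta (p : ℕ) (a : ℤ → ℕ) (j : ℤ) : ℤ :=
  if h : ∃ i : ℤ, i < j ∧ a (i + 1) = p ∧ ∀ m : ℤ, i + 1 < m → m ≤ j → a m = p - 1
  then h.choose else j

/-- The map `ℤ/fℤ → ℤ/fℤ` induced by `δ`. -/
noncomputable def sigDeltaBar (p f : ℕ) (a : ℤ → ℕ) (x : ZMod f) : ZMod f :=
  ((sigDelta p a (x.val : ℤ) : ℤ) : ZMod f)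

/-- The set `μ(J) = {[i_1], …, [i_r]}` produced by the construction from a chosen
starting integer `i₁` (whose class lies in `δ(J) ∖ J`): `j₁` is the least integer with
`j₁ > i₁`, `[j₁] ∈ J` and `δ(j₁) = i₁`; writing `J = {[j_1],…,[j_r]}` with
`j_1 < ⋯ < j_r < j_1 + f`, one sets inductively `i_κ = δ(j_κ)` if `i_{κ−1} < δ(j_κ)`
and `i_κ = j_κ` otherwise. -/
noncomputable def sigMuFrom (p f : ℕ) (a : ℤ → ℕ) (J : Set (ZMod f)) (i₁ : ℤ) :
    Set (ZMod f) :=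
  let j₁ : ℤ :=
    if h : ∃ j : ℤ, (i₁ < j ∧ (j : ZMod f) ∈ J ∧ sigDelta p a j = i₁) ∧
        ∀ j' : ℤ, (i₁ < j' ∧ (j' : ZMod f) ∈ J ∧ sigDelta p a j' = i₁) → j ≤ j'
    then h.choose else i₁ + 1
  -- the representatives of `J` in the window `[j₁, j₁ + f)`, in increasing order:
  -- `jSeq κ` is the `(κ+1)`-st smallest, i.e. `j_{κ+1}` in the notation above
  let jSeq : ℕ → ℤ := fun κ =>
    j₁ + (Nat.nth (fun v : ℕ => ∃ x ∈ J, (x - (j₁ : ZMod f)).val = v) κ : ℤ)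
  let iSeq : ℕ → ℤ := fun κ =>
    Nat.rec (motive := fun _ => ℤ) i₁
      (fun κ' ih =>
        if ih < sigDelta p a (jSeq (κ' + 1)) then sigDelta p a (jSeq (κ' + 1))
        else jSeq (κ' + 1)) κ
  { y : ZMod f | ∃ κ : ℕ, κ < J.ncard ∧ y = (Int.cast (iSeq κ) : ZMod f) }

/-- The set `μ(J)`: if `δ(J) ⊆ J` then `μ(J) = J`; otherwise it is produced by the
construction `sigMuFrom` applied to a choice of `[i₁] ∈ δ(J) ∖ J`. -/
noncomputable def sigMu (p f : ℕ) (a : ℤ → ℕ) (J : Set (ZMod f)) : Set (ZMod f) :=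
  if sigDeltaBar p f a '' J ⊆ J then J
  else if h : ∃ i : ℤ, (i : ZMod f) ∈ (sigDeltaBar p f a '' J) \ J
    then sigMuFrom p f a J h.choose else J

/-!
Everything in the construction commutes with translation by `f`, so one may assume
`i₁ < i₁' < i₁ + f`. No representative of `J` lies in `[i₁, j₁)`: one in `(i₁, j₁)` would also
have `δ = i₁` and contradict the minimality of `j₁`. Hence the window `[j₁', j₁' + f)` used for
`i₁'` is the window `[j₁, j₁ + f)` rotated at `j₁' = j_m`, with the part before `j_m` moved up
by `f`. The sequence started at `i₁` reaches `i_m = δ(j₁') = i₁'`, because all its earlier terms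
lie below `i₁'`; symmetrically the sequence started at `i₁'` reaches `δ(j₁ + f) = i₁ + f` right
after the wrap-around. Since each term depends only on the previous one and the next `j`, the
two sequences agree up to this rotation and the shift by `f`, so they have the same classes
modulo `f`.
-/

open Set

section Delta

variable {p f : ℕ} {a : ℤ → ℕ}

def SigRun (p : ℕ) (a : ℤ → ℕ) (i j : ℤ) : Prop :=
  i < j ∧ a (i + 1) = p ∧ ∀ m : ℤ, i + 1 < m → m ≤ j → a m = p - 1

theorem SigRun.left_unique (hp : p ≠ 0) {i i' j : ℤ} (h : SigRun p a i j)
    (h' : SigRun p a i' j) : i = i' := by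
  by_contra hne
  wlog hlt : i < i' generalizing i i'
  · exact this h' h (Ne.symm hne) (by omega)
  have := h.2.2 (i' + 1) (by omega) (by linarith [h'.1])
  have := h'.2.1
  omega

theorem SigRun.mono_right {i j j' : ℤ} (h : SigRun p a i j) (hij' : i < j') (hj' : j' ≤ j) :
    SigRun p a i j' :=
  ⟨hij', h.2.1, fun m hm hmj => h.2.2 m hm (hmj.trans hj')⟩

theorem SigRun.add_mul (ha : Function.Periodic a f) {i j : ℤ} (k : ℤ) (h : SigRun p a i j) :
    SigRun p a (i + k * f) (j + k * f) := by
  obtain ⟨hij, hi, hm⟩ := h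
  have hk (x : ℤ) : a (x + k * f) = a x := by simpa using ha.int_mul k x
  refine ⟨by omega, by rw [add_right_comm, hk, hi], fun m hm₁ hm₂ => ?_⟩
  rw [← sub_add_cancel m (k * f), hk]
  exact hm _ (by omega) (by omega)

theorem sigDelta_eq_of_sigRun (hp : p ≠ 0) {i j : ℤ} (h : SigRun p a i j) :
    sigDelta p a j = i := by
  rw [sigDelta, dif_pos ⟨i, h⟩]
  exact SigRun.left_unique hp (Exists.choose_spec (⟨i, h⟩ : ∃ i, SigRun p a i j)) h

theorem sigDelta_eq_or_sigRun (j : ℤ) : sigDelta p a j = j ∨ SigRun p a (sigDelta p a j) j := by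
  unfold sigDelta
  split_ifs with h
  · exact Or.inr h.choose_spec
  · exact Or.inl rfl

theorem sigDelta_le (j : ℤ) : sigDelta p a j ≤ j :=
  (sigDelta_eq_or_sigRun j).elim le_of_eq fun h => h.1.le

theorem sigRun_sigDelta_of_lt {j : ℤ} (h : sigDelta p a j < j) : SigRun p a (sigDelta p a j) j :=
  (sigDelta_eq_or_sigRun j).resolve_left h.ne

theorem sigDelta_add_mul (hp : p ≠ 0) (ha : Function.Periodic a f) (j k : ℤ) :
    sigDelta p a (j + k * f) = sigDelta p a j + k * f := by
  rcases sigDelta_eq_or_sigRun (p := p) (a := a) j with h | h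
  · rcases sigDelta_eq_or_sigRun (p := p) (a := a) (j + k * f) with h' | h'
    · omega
    · have := sigDelta_eq_of_sigRun hp (by simpa using h'.add_mul ha (-k))
      omega
  · exact sigDelta_eq_of_sigRun hp (h.add_mul ha k)

end Delta

section Iter

variable (d : ℤ → ℤ) (g : ℕ → ℤ) (i₁ : ℤ)

def muIter : ℕ → ℤ :=
  Nat.rec i₁ fun κ i => if i < d (g (κ + 1)) then d (g (κ + 1)) else g (κ + 1)

theorem muIter_succ (κ : ℕ) :
    muIter d g i₁ (κ + 1) =
      if muIter d g i₁ κ < d (g (κ + 1)) then d (g (κ + 1)) else g (κ + 1) := rfl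

theorem muIter_add (m κ : ℕ) :
    muIter d g i₁ (m + κ) = muIter d (fun κ => g (m + κ)) (muIter d g i₁ m) κ := by
  induction κ with
  | zero => rfl
  | succ κ ih => rw [← add_assoc, muIter_succ, muIter_succ, ih, add_assoc]

variable {d g i₁}

theorem muIter_congr {g' : ℕ → ℤ} {n : ℕ} (h : ∀ κ < n, g (κ + 1) = g' (κ + 1)) {κ : ℕ}
    (hκ : κ ≤ n) : muIter d g i₁ κ = muIter d g' i₁ κ := by
  induction κ with
  | zero => rfl
  | succ κ ih => rw [muIter_succ, muIter_succ, ih (by omega), h κ (by omega)]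

theorem muIter_add_const {c : ℤ} (hd : ∀ j, d (j + c) = d j + c) (κ : ℕ) :
    muIter d (fun κ => g κ + c) (i₁ + c) κ = muIter d g i₁ κ + c := by
  induction κ with
  | zero => rfl
  | succ κ ih =>
    rw [muIter_succ, muIter_succ, ih, hd]
    split_ifs <;> omega

theorem muIter_succ_le (hd : ∀ j, d j ≤ j) (κ : ℕ) : muIter d g i₁ (κ + 1) ≤ g (κ + 1) := by
  rw [muIter_succ]
  split_ifs
  exacts [hd _, le_rfl]

end Iter

theorem StrictMonoOn.eqOn_of_image_subset {β : Type*} [LinearOrder β] {r : ℕ} {g g' : ℕ → β}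
    (hg : StrictMonoOn g (Iio r)) (hg' : StrictMonoOn g' (Iio r))
    (h : g '' Iio r ⊆ g' '' Iio r) : EqOn g g' (Iio r) := by
  have himage : g '' Iio r = g' '' Iio r := Set.eq_of_subset_of_ncard_le h
    (by rw [hg.injOn.ncard_image, hg'.injOn.ncard_image]) (toFinite _)
  have hrange (u : ℕ → β) : range (fun κ : Fin r => u κ) = u '' Iio r := by
    rw [← Fin.range_val, ← range_comp]; rfl
  have hmono {u : ℕ → β} (hu : StrictMonoOn u (Iio r)) : StrictMono fun κ : Fin r => u κ :=
    fun κ κ' hlt => hu κ.isLt κ'.isLt hlt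
  have hfin : (fun κ : Fin r => g κ) = fun κ : Fin r => g' κ :=
    ((hmono hg).range_inj (hmono hg')).1 (by rw [hrange, hrange, himage])
  exact fun κ hκ => congrFun hfin ⟨κ, hκ⟩

section Window

noncomputable def windowEnum (f : ℕ) (J : Set (ZMod f)) (b : ℤ) (κ : ℕ) : ℤ :=
  b + (Nat.nth (fun v : ℕ => ∃ x ∈ J, (x - (b : ZMod f)).val = v) κ : ℤ)

variable {f : ℕ} {J : Set (ZMod f)}

theorem le_windowEnum (b : ℤ) (κ : ℕ) : b ≤ windowEnum f J b κ :=
  le_add_of_nonneg_right (Int.natCast_nonneg _)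

theorem windowEnum_zero {b : ℤ} (hb : (b : ZMod f) ∈ J) : windowEnum f J b 0 = b := by
  rw [windowEnum, Nat.nth_zero_of_zero ⟨_, hb, by simp⟩]
  simp

theorem windowEnum_add_mul (b k : ℤ) (κ : ℕ) :
    windowEnum f J (b + k * f) κ = windowEnum f J b κ + k * f := by
  simp only [windowEnum, Int.cast_add, Int.cast_mul, Int.cast_natCast, ZMod.natCast_self,
    mul_zero, add_zero]
  ring

variable [NeZero f]

theorem finite_windowOffsets (b : ZMod f) :
    (Set.ofPred fun v : ℕ => ∃ x ∈ J, (x - b).val = v).Finite :=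
  J.toFinite.image fun x => (x - b).val

theorem card_windowOffsets (b : ZMod f) :
    (finite_windowOffsets (J := J) b).toFinset.card = J.ncard := by
  rw [← Set.ncard_eq_toFinset_card _ (finite_windowOffsets b)]
  exact Set.ncard_image_of_injective J ((ZMod.val_injective f).comp (sub_left_injective (b := b)))

theorem windowEnum_strictMonoOn (b : ℤ) : StrictMonoOn (windowEnum f J b) (Iio J.ncard) := by
  intro κ hκ κ' hκ' hlt
  have := Nat.nth_strictMonoOn (finite_windowOffsets (J := J) b)
    (by rwa [card_windowOffsets]) (by rwa [card_windowOffsets]) hlt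
  unfold windowEnum
  omega

theorem windowEnum_mem_and_lt {b : ℤ} {κ : ℕ} (hκ : κ < J.ncard) :
    ((windowEnum f J b κ : ℤ) : ZMod f) ∈ J ∧ windowEnum f J b κ < b + f := by
  obtain ⟨x, hx, hval⟩ :=
    Nat.nth_mem_of_lt_card (finite_windowOffsets (J := J) b) (by rwa [card_windowOffsets])
  unfold windowEnum
  refine ⟨?_, by have := ZMod.val_lt (x - (b : ZMod f)); omega⟩
  rw [← hval]
  push_cast
  simpa using hx

theorem exists_windowEnum_eq {b j : ℤ} (hj : (j : ZMod f) ∈ J) (hbj : b ≤ j) (hjb : j < b + f) :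
    ∃ κ < J.ncard, windowEnum f J b κ = j := by
  lift j - b to ℕ using (by omega) with v hv
  have hoff : ∃ x ∈ J, (x - (b : ZMod f)).val = v :=
    ⟨j, hj, by rw [← Int.cast_sub, ← hv, Int.cast_natCast, ZMod.val_cast_of_lt (by omega)]⟩
  refine ⟨Nat.count (fun v => ∃ x ∈ J, (x - (b : ZMod f)).val = v) v, ?_, ?_⟩
  · rw [← card_windowOffsets (J := J) (b : ZMod f)]
    exact Nat.count_lt_card _ hoff
  · rw [windowEnum, Nat.nth_count hoff]
    omega

theorem eqOn_windowEnum {b : ℤ} {g : ℕ → ℤ} (hg : StrictMonoOn g (Iio J.ncard))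
    (hgJ : ∀ κ < J.ncard, (g κ : ZMod f) ∈ J ∧ b ≤ g κ ∧ g κ < b + f) :
    EqOn g (windowEnum f J b) (Iio J.ncard) := by
  refine hg.eqOn_of_image_subset (windowEnum_strictMonoOn b) ?_
  rintro _ ⟨κ, hκ, rfl⟩
  obtain ⟨hJ, hb, hb'⟩ := hgJ κ hκ
  obtain ⟨κ', hκ', heq⟩ := exists_windowEnum_eq hJ hb hb'
  exact ⟨κ', hκ', heq⟩

theorem windowEnum_windowEnum {b : ℤ} {m : ℕ} (hm : m < J.ncard) :
    EqOn (fun κ => if κ < J.ncard - m then windowEnum f J b (m + κ)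
        else windowEnum f J b (κ - (J.ncard - m)) + f)
      (windowEnum f J (windowEnum f J b m)) (Iio J.ncard) := by
  have hmono := windowEnum_strictMonoOn (J := J) b
  have hlt {κ : ℕ} (hκ : κ < J.ncard) := (windowEnum_mem_and_lt (b := b) hκ).2
  have hge := le_windowEnum (J := J) b
  refine eqOn_windowEnum (fun κ hκ κ' hκ' hκκ' => ?_) fun κ hκ => ?_
  · simp only [mem_Iio] at hκ hκ'
    split_ifs with h h' h'
    · exact hmono (mem_Iio.2 (by omega)) (mem_Iio.2 (by omega)) (by omega)
    · linarith [hlt (show m + κ < J.ncard by omega), hge (κ' - (J.ncard - m))]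
    · omega
    · linarith [hmono (mem_Iio.2 (by omega)) (mem_Iio.2 (by omega))
        (show κ - (J.ncard - m) < κ' - (J.ncard - m) by omega)]
  · split_ifs with h
    · refine ⟨(windowEnum_mem_and_lt (by omega)).1, hmono.monotoneOn (mem_Iio.2 (by omega))
        (mem_Iio.2 (by omega)) (by omega), by linarith [hlt (show m + κ < J.ncard by omega), hge m]⟩
    · have hκm : κ - (J.ncard - m) < m := by omega
      refine ⟨by simpa using (windowEnum_mem_and_lt (b := b) (by omega)).1, ?_, ?_⟩
      · linarith [hlt hm, hge (κ - (J.ncard - m))]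
      · linarith [hmono (mem_Iio.2 (by omega)) (mem_Iio.2 (by omega)) hκm]

theorem windowEnum_windowEnum_of_add_lt {b : ℤ} {m κ : ℕ} (hmκ : m + κ < J.ncard) :
    windowEnum f J (windowEnum f J b m) κ = windowEnum f J b (m + κ) := by
  rw [← windowEnum_windowEnum (by omega) (show κ < J.ncard by omega)]
  exact if_pos (by omega)

theorem windowEnum_windowEnum_sub_add {b : ℤ} {m κ : ℕ} (hκ : κ < m) (hm : m < J.ncard) :
    windowEnum f J (windowEnum f J b m) (J.ncard - m + κ) = windowEnum f J b κ + f := by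
  rw [← windowEnum_windowEnum hm (show J.ncard - m + κ < J.ncard by omega)]
  simp only [if_neg (show ¬J.ncard - m + κ < J.ncard - m by omega), Nat.add_sub_cancel_left]

end Window

section Start

def IsSigFirstCandidate (p f : ℕ) (a : ℤ → ℕ) (J : Set (ZMod f)) (i₁ j : ℤ) : Prop :=
  i₁ < j ∧ (j : ZMod f) ∈ J ∧ sigDelta p a j = i₁

noncomputable def sigFirst (p f : ℕ) (a : ℤ → ℕ) (J : Set (ZMod f)) (i₁ : ℤ) : ℤ :=
  if h : ∃ j, IsSigFirstCandidate p f a J i₁ j ∧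
      ∀ j', IsSigFirstCandidate p f a J i₁ j' → j ≤ j'
  then h.choose else i₁ + 1

noncomputable def sigMuSeq (p f : ℕ) (a : ℤ → ℕ) (J : Set (ZMod f)) (i₁ : ℤ) : ℕ → ℤ :=
  muIter (sigDelta p a) (windowEnum f J (sigFirst p f a J i₁)) i₁

variable {p f : ℕ} {a : ℤ → ℕ} {J : Set (ZMod f)} {i₁ : ℤ}

theorem sigMuFrom_eq_setOf_sigMuSeq :
    sigMuFrom p f a J i₁ = {y | ∃ κ < J.ncard, y = (sigMuSeq p f a J i₁ κ : ZMod f)} := rfl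

variable [NeZero f]

theorem exists_isSigFirstCandidate (hp : p ≠ 0) (ha : Function.Periodic a f)
    (hstart : (i₁ : ZMod f) ∈ (sigDeltaBar p f a '' J) \ J) :
    ∃ j, IsSigFirstCandidate p f a J i₁ j := by
  obtain ⟨⟨x, hx, hδx⟩, hi₁⟩ := hstart
  have hδlt : sigDelta p a x.val < x.val := by
    refine (sigDelta_le _).lt_of_ne fun h => hi₁ ?_
    rwa [← hδx, sigDeltaBar, h, Int.cast_natCast, ZMod.natCast_zmod_val]
  obtain ⟨k, hk⟩ := (ZMod.intCast_eq_intCast_iff_dvd_sub _ _ _).1 hδx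
  rw [mul_comm] at hk
  refine ⟨x.val + k * f, by omega, by simpa using hx, ?_⟩
  rw [sigDelta_add_mul hp ha]
  linarith

theorem sigFirst_spec (hp : p ≠ 0) (ha : Function.Periodic a f)
    (hstart : (i₁ : ZMod f) ∈ (sigDeltaBar p f a '' J) \ J) :
    IsSigFirstCandidate p f a J i₁ (sigFirst p f a J i₁) ∧
      ∀ j, IsSigFirstCandidate p f a J i₁ j → sigFirst p f a J i₁ ≤ j := by
  have hleast := Int.exists_least_of_bdd ⟨i₁, fun _ hj => hj.1.le⟩
    (exists_isSigFirstCandidate hp ha hstart)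
  rw [sigFirst, dif_pos hleast]
  exact hleast.choose_spec

theorem notMem_of_le_of_lt_sigFirst (hp : p ≠ 0) (ha : Function.Periodic a f)
    (hstart : (i₁ : ZMod f) ∈ (sigDeltaBar p f a '' J) \ J) {j : ℤ} (hi₁j : i₁ ≤ j)
    (hj : j < sigFirst p f a J i₁) : (j : ZMod f) ∉ J := by
  obtain ⟨⟨hlt, -, hδ⟩, hmin⟩ := sigFirst_spec hp ha hstart
  rcases hi₁j.eq_or_lt with rfl | hi₁j
  · exact hstart.2
  have hrun : SigRun p a i₁ (sigFirst p f a J i₁) := by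
    have := sigRun_sigDelta_of_lt (p := p) (a := a) (j := sigFirst p f a J i₁) (by rwa [hδ])
    rwa [hδ] at this
  exact fun hjJ => (hmin j ⟨hi₁j, hjJ, sigDelta_eq_of_sigRun hp (hrun.mono_right hi₁j hj.le)⟩).not_gt hj

theorem sigFirst_eq_of_isSigFirstCandidate (hp : p ≠ 0) (ha : Function.Periodic a f)
    (hstart : (i₁ : ZMod f) ∈ (sigDeltaBar p f a '' J) \ J) {j : ℤ}
    (hj : IsSigFirstCandidate p f a J i₁ j)
    (hgap : ∀ j', i₁ ≤ j' → j' < j → (j' : ZMod f) ∉ J) : sigFirst p f a J i₁ = j := by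
  obtain ⟨⟨hlt, hmem, -⟩, hmin⟩ := sigFirst_spec hp ha hstart
  exact (hmin j hj).antisymm (not_lt.1 fun h => hgap _ hlt.le h hmem)

theorem sigFirst_add_mul (hp : p ≠ 0) (ha : Function.Periodic a f)
    (hstart : (i₁ : ZMod f) ∈ (sigDeltaBar p f a '' J) \ J) (k : ℤ) :
    sigFirst p f a J (i₁ + k * f) = sigFirst p f a J i₁ + k * f := by
  obtain ⟨⟨hlt, hmem, hδ⟩, -⟩ := sigFirst_spec hp ha hstart
  refine sigFirst_eq_of_isSigFirstCandidate hp ha (by simpa using hstart)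
    ⟨by omega, by simpa using hmem, by rw [sigDelta_add_mul hp ha, hδ]⟩ fun j h₁ h₂ hj => ?_
  refine notMem_of_le_of_lt_sigFirst hp ha hstart (j := j - k * f) (by omega) (by omega) ?_
  simpa using hj

theorem windowEnum_sigFirst_lt (hp : p ≠ 0) (ha : Function.Periodic a f)
    (hstart : (i₁ : ZMod f) ∈ (sigDeltaBar p f a '' J) \ J) {κ : ℕ} (hκ : κ < J.ncard) :
    windowEnum f J (sigFirst p f a J i₁) κ < i₁ + f := by
  have hlt := (sigFirst_spec hp ha hstart).1.1
  obtain ⟨hmem, hlt'⟩ := windowEnum_mem_and_lt (b := sigFirst p f a J i₁) hκ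
  refine not_le.1 fun h => notMem_of_le_of_lt_sigFirst hp ha hstart
    (j := windowEnum f J (sigFirst p f a J i₁) κ - f) (by omega) (by omega) ?_
  simpa using hmem

theorem sigMuSeq_le_windowEnum (hp : p ≠ 0) (ha : Function.Periodic a f)
    (hstart : (i₁ : ZMod f) ∈ (sigDeltaBar p f a '' J) \ J) (κ : ℕ) :
    sigMuSeq p f a J i₁ κ ≤ windowEnum f J (sigFirst p f a J i₁) κ := by
  cases κ with
  | zero => exact (sigFirst_spec hp ha hstart).1.1.le.trans (le_windowEnum _ 0)
  | succ κ => exact muIter_succ_le sigDelta_le κ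

theorem sigMuSeq_lt (hp : p ≠ 0) (ha : Function.Periodic a f)
    (hstart : (i₁ : ZMod f) ∈ (sigDeltaBar p f a '' J) \ J) {κ : ℕ} (hκ : κ < J.ncard) :
    sigMuSeq p f a J i₁ κ < i₁ + f :=
  (sigMuSeq_le_windowEnum hp ha hstart κ).trans_lt (windowEnum_sigFirst_lt hp ha hstart hκ)

end Start

section Rotation

variable {p f : ℕ} [NeZero f] {a : ℤ → ℕ} {J : Set (ZMod f)} {i₁ i₁' : ℤ}

theorem sigMuSeq_add_mul (hp : p ≠ 0) (ha : Function.Periodic a f)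
    (hstart : (i₁ : ZMod f) ∈ (sigDeltaBar p f a '' J) \ J) (k : ℤ) (κ : ℕ) :
    sigMuSeq p f a J (i₁ + k * f) κ = sigMuSeq p f a J i₁ κ + k * f := by
  rw [sigMuSeq, sigFirst_add_mul hp ha hstart, funext (windowEnum_add_mul (J := J) _ k)]
  exact muIter_add_const (fun j => sigDelta_add_mul hp ha j k) κ

theorem sigMuFrom_add_mul (hp : p ≠ 0) (ha : Function.Periodic a f)
    (hstart : (i₁ : ZMod f) ∈ (sigDeltaBar p f a '' J) \ J) (k : ℤ) :
    sigMuFrom p f a J (i₁ + k * f) = sigMuFrom p f a J i₁ := by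
  simp only [sigMuFrom_eq_setOf_sigMuSeq, sigMuSeq_add_mul hp ha hstart, Int.cast_add,
    Int.cast_mul, Int.cast_natCast, ZMod.natCast_self, mul_zero, add_zero]

theorem sigFirst_mem_Ico_of_lt (hp : p ≠ 0) (ha : Function.Periodic a f)
    (hstart : (i₁ : ZMod f) ∈ (sigDeltaBar p f a '' J) \ J)
    (hstart' : (i₁' : ZMod f) ∈ (sigDeltaBar p f a '' J) \ J) (h : i₁ < i₁')
    (h' : i₁' < i₁ + f) :
    sigFirst p f a J i₁ ≤ sigFirst p f a J i₁' ∧ sigFirst p f a J i₁' < sigFirst p f a J i₁ + f := by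
  obtain ⟨⟨hlt, hmem, hδ⟩, -⟩ := sigFirst_spec hp ha hstart
  obtain ⟨⟨hlt', hmem', hδ'⟩, -⟩ := sigFirst_spec hp ha hstart'
  refine ⟨not_lt.1 fun hc => notMem_of_le_of_lt_sigFirst hp ha hstart (by omega) hc hmem', ?_⟩
  rcases lt_trichotomy (sigFirst p f a J i₁') (sigFirst p f a J i₁ + f) with hc | hc | hc
  · exact hc
  · have := sigDelta_add_mul hp ha (sigFirst p f a J i₁) 1
    rw [one_mul, ← hc, hδ, hδ'] at this
    omega
  · refine absurd ?_ (notMem_of_le_of_lt_sigFirst hp ha hstart' (by omega) hc)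
    simpa using hmem

theorem sigMuSeq_eq_of_windowEnum_eq (hp : p ≠ 0) (ha : Function.Periodic a f)
    (hstart : (i₁ : ZMod f) ∈ (sigDeltaBar p f a '' J) \ J)
    (hstart' : (i₁' : ZMod f) ∈ (sigDeltaBar p f a '' J) \ J) (h : i₁ < i₁') {m : ℕ}
    (hm : m < J.ncard) (hcm : windowEnum f J (sigFirst p f a J i₁) m = sigFirst p f a J i₁') :
    sigMuSeq p f a J i₁ m = i₁' := by
  obtain ⟨⟨-, hmem, hδ⟩, -⟩ := sigFirst_spec hp ha hstart
  obtain ⟨⟨-, -, hδ'⟩, -⟩ := sigFirst_spec hp ha hstart'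
  obtain - | m := m
  · rw [windowEnum_zero hmem] at hcm
    rw [← hcm, hδ] at hδ'
    omega
  have hEm : windowEnum f J (sigFirst p f a J i₁) m < i₁' := by
    have hmono := windowEnum_strictMonoOn (J := J) (sigFirst p f a J i₁)
      (show m < J.ncard by omega) hm (Nat.lt_succ_self m)
    refine not_le.1 fun hle => notMem_of_le_of_lt_sigFirst hp ha hstart' hle (hcm ▸ hmono)
      (windowEnum_mem_and_lt (by omega)).1
  have hprev := (sigMuSeq_le_windowEnum hp ha hstart m).trans_lt hEm
  rw [sigMuSeq, muIter_succ, hcm, hδ']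
  exact if_pos hprev

theorem sigMuSeq_of_add_lt (hp : p ≠ 0) (ha : Function.Periodic a f)
    (hstart : (i₁ : ZMod f) ∈ (sigDeltaBar p f a '' J) \ J)
    (hstart' : (i₁' : ZMod f) ∈ (sigDeltaBar p f a '' J) \ J) (h : i₁ < i₁') {m κ : ℕ}
    (hmκ : m + κ < J.ncard)
    (hcm : windowEnum f J (sigFirst p f a J i₁) m = sigFirst p f a J i₁') :
    sigMuSeq p f a J i₁' κ = sigMuSeq p f a J i₁ (m + κ) := by
  have hm := sigMuSeq_eq_of_windowEnum_eq hp ha hstart hstart' h (by omega) hcm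
  unfold sigMuSeq at hm ⊢
  rw [muIter_add, hm, ← hcm]
  exact muIter_congr (fun j hj => windowEnum_windowEnum_of_add_lt (by omega)) le_rfl

theorem sigMuSeq_sub_add (hp : p ≠ 0) (ha : Function.Periodic a f)
    (hstart : (i₁ : ZMod f) ∈ (sigDeltaBar p f a '' J) \ J)
    (hstart' : (i₁' : ZMod f) ∈ (sigDeltaBar p f a '' J) \ J) (h : i₁ < i₁') {m κ : ℕ}
    (hκ : κ < m) (hm : m < J.ncard)
    (hcm : windowEnum f J (sigFirst p f a J i₁) m = sigFirst p f a J i₁') :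
    sigMuSeq p f a J i₁' (J.ncard - m + κ) = sigMuSeq p f a J i₁ κ + f := by
  have hδf (j : ℤ) : sigDelta p a (j + f) = sigDelta p a j + f := by
    simpa using sigDelta_add_mul hp ha j 1
  obtain ⟨⟨-, hmem, hδ⟩, -⟩ := sigFirst_spec hp ha hstart
  have hwrap : sigMuSeq p f a J i₁' (J.ncard - m) = i₁ + f := by
    obtain ⟨n, hn⟩ : ∃ n, J.ncard - m = n + 1 := ⟨J.ncard - m - 1, by omega⟩
    have hE := windowEnum_windowEnum_sub_add (b := sigFirst p f a J i₁) (by omega : 0 < m) hm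
    rw [add_zero, hn, windowEnum_zero hmem, hcm] at hE
    have hprev := sigMuSeq_lt hp ha hstart (κ := m + n) (by omega)
    rw [← sigMuSeq_of_add_lt hp ha hstart hstart' h (by omega) hcm] at hprev
    rw [hn, sigMuSeq, muIter_succ, ← sigMuSeq, hE, hδf, hδ]
    exact if_pos hprev
  rw [sigMuSeq, muIter_add, ← sigMuSeq, hwrap, ← hcm,
    muIter_congr (g' := fun κ => windowEnum f J (sigFirst p f a J i₁) κ + f)
      (fun j hj => windowEnum_windowEnum_sub_add (by omega) hm) le_rfl]
  exact muIter_add_const hδf κ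

theorem setOf_exists_lt_eq_of_rotate {α : Type*} {u v : ℕ → α} {r m : ℕ} (hm : m ≤ r)
    (h₁ : ∀ κ, m + κ < r → v κ = u (m + κ)) (h₂ : ∀ κ < m, v (r - m + κ) = u κ) :
    {y | ∃ κ < r, y = v κ} = {y | ∃ κ < r, y = u κ} := by
  ext y
  constructor
  · rintro ⟨κ, hκ, rfl⟩
    by_cases hκm : κ < r - m
    · exact ⟨m + κ, by omega, h₁ κ (by omega)⟩
    · refine ⟨κ - (r - m), by omega, ?_⟩
      rw [← h₂ _ (by omega), Nat.add_sub_cancel' (by omega)]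
  · rintro ⟨κ, hκ, rfl⟩
    by_cases hκm : κ < m
    · exact ⟨r - m + κ, by omega, (h₂ κ hκm).symm⟩
    · refine ⟨κ - m, by omega, ?_⟩
      rw [h₁ _ (by omega), Nat.add_sub_cancel' (by omega)]

theorem sigMuFrom_eq_of_lt_of_lt (hp : p ≠ 0) (ha : Function.Periodic a f)
    (hstart : (i₁ : ZMod f) ∈ (sigDeltaBar p f a '' J) \ J)
    (hstart' : (i₁' : ZMod f) ∈ (sigDeltaBar p f a '' J) \ J) (h : i₁ < i₁')
    (h' : i₁' < i₁ + f) : sigMuFrom p f a J i₁' = sigMuFrom p f a J i₁ := by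
  obtain ⟨hle, hlt⟩ := sigFirst_mem_Ico_of_lt hp ha hstart hstart' h h'
  obtain ⟨m, hm, hcm⟩ := exists_windowEnum_eq (sigFirst_spec hp ha hstart').1.2.1 hle hlt
  rw [sigMuFrom_eq_setOf_sigMuSeq, sigMuFrom_eq_setOf_sigMuSeq]
  refine setOf_exists_lt_eq_of_rotate hm.le
    (fun κ hκ => by rw [sigMuSeq_of_add_lt hp ha hstart hstart' h hκ hcm]) fun κ hκ => ?_
  rw [sigMuSeq_sub_add hp ha hstart hstart' h hκ hm hcm]
  simp

end Rotation

theorem sigMuFrom_independent_of_choice_general (p f : ℕ) (a : ℤ → ℕ) (hp : p.Prime)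
    (hsig : IsTameSignature p f a) (J : Set (ZMod f)) (i₁ i₁' : ℤ)
    (h₁ : (i₁ : ZMod f) ∈ (sigDeltaBar p f a '' J) \ J)
    (h₁' : (i₁' : ZMod f) ∈ (sigDeltaBar p f a '' J) \ J) :
    sigMuFrom p f a J i₁ = sigMuFrom p f a J i₁' := by
  obtain ⟨hf, ha, -⟩ := hsig
  have : NeZero f := ⟨hf.ne'⟩
  have hf' : (0 : ℤ) < f := by exact_mod_cast hf
  have hdecomp : i₁' = i₁ + (i₁' - i₁) % f + (i₁' - i₁) / f * f := by
    linarith [Int.emod_add_mul_ediv (i₁' - i₁) f, mul_comm ((i₁' - i₁) / f) f]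
  have he₀ := Int.emod_nonneg (i₁' - i₁) hf'.ne'
  have he₁ := Int.emod_lt_of_pos (i₁' - i₁) hf'
  have h₁e : ((i₁ + (i₁' - i₁) % f : ℤ) : ZMod f) ∈ (sigDeltaBar p f a '' J) \ J := by
    rw [hdecomp] at h₁'
    simpa using h₁'
  rw [hdecomp, sigMuFrom_add_mul hp.ne_zero ha h₁e]
  rcases he₀.eq_or_lt with he | he
  · rw [← he, add_zero]
  · exact (sigMuFrom_eq_of_lt_of_lt hp.ne_zero ha h₁ h₁e (by omega) (by omega)).symm

/-- If `δ(J) ⊄ J`, the set `μ(J) = {[i_1], …, [i_r]}` produced by the construction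
is independent of the choice of the initial element `[i₁] ∈ δ(J) ∖ J`. -/
theorem sigMuFrom_independent_of_choice (p f : ℕ) (a : ℤ → ℕ) (hp : p.Prime)
    (hsig : IsTameSignature p f a) (J : Set (ZMod f))
    (hJ : ¬ sigDeltaBar p f a '' J ⊆ J) (i₁ i₁' : ℤ)
    (h₁ : (i₁ : ZMod f) ∈ (sigDeltaBar p f a '' J) \ J)
    (h₁' : (i₁' : ZMod f) ∈ (sigDeltaBar p f a '' J) \ J) :
    sigMuFrom p f a J i₁ = sigMuFrom p f a J i₁' :=
  sigMuFrom_independent_of_choice_general p f a hp hsig J i₁ i₁' h₁ h₁'
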